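/- arXiv:1902.00908 — 3 statements merged into one kernel-verified Lean document; each statement's English description precedes it below -/
import Mathlib

section
/- Let H be a real inner product space and φ : H → ℝ a differentiable nonnegative function whose gradient is α-Hölder continuous with constant L > 0 and exponent α ∈ (0,1]. Then for every w ∈ H, ‖∇φ(w)‖^{(1+α)/α} ≤ ((1+α) L^{1/α} / α) · φ(w). -/
open Real

/-!
Comparing derivatives along the segment from `w` to `w + v` turns the Hölder bound on the gradient
into the descent inequality
`φ (w + v) ≤ φ w + ⟪∇φ w, v⟫ + L / (1 + α) * ‖v‖ ^ (1 + α)`. Taking `v` against `∇φ w` with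
length `s` and using `φ ≥ 0` gives `s ‖∇φ w‖ - L / (1 + α) * s ^ (1 + α) ≤ φ w` for every `s ≥ 0`;
the step `s = (‖∇φ w‖ / L) ^ (1 / α)` maximises the left side, and its value is the claim.
-/

theorem le_add_apply_add_rpow_of_holder_fderiv {E : Type*} [NormedAddCommGroup E]
    [NormedSpace ℝ E] {f : E → ℝ} {f' : E → StrongDual ℝ E} (hf : ∀ x, HasFDerivAt f (f' x) x)
    {α L : ℝ} (hα : 0 ≤ α) (hf' : ∀ x y, ‖f' x - f' y‖ ≤ L * ‖x - y‖ ^ α) (x v : E) :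
    f (x + v) ≤ f x + f' x v + L / (1 + α) * ‖v‖ ^ (1 + α) := by
  have hα₁ : 1 + α ≠ 0 := by positivity
  have hpath (t : ℝ) : HasDerivAt (fun t : ℝ => f (x + t • v)) (f' (x + t • v) v) t := by
    have hline : HasDerivAt (fun t : ℝ => x + t • v) v t := by
      simpa using ((hasDerivAt_id t).smul_const v).const_add x
    exact (hf _).comp_hasDerivAt t hline
  have hmodel (t : ℝ) : HasDerivAt (fun t => f x + t * f' x v + L / (1 + α) * (t * ‖v‖) ^ (1 + α))
      (f' x v + L * (t * ‖v‖) ^ α * ‖v‖) t := by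
    have hpow := (hasDerivAt_mul_const (x := t) ‖v‖).rpow_const (p := 1 + α) (by simp [hα])
    refine (((hasDerivAt_mul_const (f' x v)).const_add (f x)).add
      (hpow.const_mul (L / (1 + α)))).congr_deriv ?_
    rw [add_sub_cancel_left]
    field_simp
  have hslope (t : ℝ) (ht : 0 ≤ t) : f' (x + t • v) v ≤ f' x v + L * (t * ‖v‖) ^ α * ‖v‖ :=
    calc f' (x + t • v) v = f' x v + (f' (x + t • v) - f' x) v := by simp
      _ ≤ f' x v + ‖f' (x + t • v) - f' x‖ * ‖v‖ := by
        gcongr; exact (le_abs_self _).trans ((f' (x + t • v) - f' x).le_opNorm v)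
      _ ≤ f' x v + L * (t * ‖v‖) ^ α * ‖v‖ := by
        gcongr
        simpa [norm_smul, abs_of_nonneg ht] using hf' (x + t • v) x
  simpa using image_le_of_deriv_right_le_deriv_boundary
    (fun t _ => (hpath t).continuousAt.continuousWithinAt) (fun t _ => (hpath t).hasDerivWithinAt)
    (by simp [zero_rpow hα₁]) (fun t _ => (hmodel t).continuousAt.continuousWithinAt)
    (fun t _ => (hmodel t).hasDerivWithinAt) (fun t ht => hslope t ht.1) ⟨zero_le_one, le_rfl⟩

theorem rpow_le_of_forall_mul_sub_rpow_le {a y L α : ℝ} (ha : 0 ≤ a) (hL : 0 < L) (hα : 0 < α)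
    (h : ∀ s, 0 ≤ s → s * a - L / (1 + α) * s ^ (1 + α) ≤ y) :
    a ^ ((1 + α) / α) ≤ (1 + α) * L ^ (1 / α) / α * y := by
  set s := (a / L) ^ (1 / α) with hs_def
  have hs : 0 ≤ s := by positivity
  have hsα : s ^ α = a / L := by
    rw [← rpow_mul (div_nonneg ha hL.le), one_div_mul_cancel hα.ne', rpow_one]
  have hsa : s * a = a ^ ((1 + α) / α) / L ^ (1 / α) := by
    rw [hs_def, div_rpow ha hL.le, show (1 + α) / α = 1 / α + 1 by field_simp,
      rpow_add_one' ha (by positivity)]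
    ring
  have hgain : α / (1 + α) * (s * a) ≤ y := by
    have hsy := h s hs
    rw [rpow_one_add' hs (by positivity), hsα] at hsy
    convert hsy using 1
    field_simp
    ring
  rw [hsa] at hgain
  rw [div_mul_eq_mul_div, le_div_iff₀ hα]
  field_simp at hgain
  linarith

theorem holder_self_bounding_general
    {H : Type*} [NormedAddCommGroup H] [InnerProductSpace ℝ H] [CompleteSpace H]
    (φ : H → ℝ) (hdiff : Differentiable ℝ φ) (hpos : ∀ w : H, 0 ≤ φ w)
    (α L : ℝ) (hα : 0 < α) (hL : 0 < L)
    (hHolder : ∀ w w' : H, ‖gradient φ w - gradient φ w'‖ ≤ L * ‖w - w'‖ ^ α) :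
    ∀ w : H, ‖gradient φ w‖ ^ ((1 + α) / α) ≤ ((1 + α) * L ^ (1 / α) / α) * φ w := by
  intro w
  have hdescent := le_add_apply_add_rpow_of_holder_fderiv
    (fun x => (hdiff x).hasGradientAt.hasFDerivAt) hα.le
    (fun x y => by rw [← map_sub, LinearIsometryEquiv.norm_map]; exact hHolder x y) w
  simp only [InnerProductSpace.toDual_apply_apply] at hdescent
  set g := gradient φ w
  refine rpow_le_of_forall_mul_sub_rpow_le (norm_nonneg g) hL hα fun s hs => ?_
  set v := -(s / ‖g‖) • g
  have hgv : inner ℝ g v = -(s * ‖g‖) := by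
    rw [real_inner_smul_right, real_inner_self_eq_norm_mul_norm, neg_mul, div_mul_eq_mul_div,
      mul_div_assoc, mul_self_div_self]
  have hv : ‖v‖ ≤ s := by
    rcases eq_or_ne ‖g‖ 0 with h | h <;> simp [v, norm_smul, h, hs, abs_of_nonneg hs]
  have hstep := hdescent v
  rw [hgv] at hstep
  have hvα : L / (1 + α) * ‖v‖ ^ (1 + α) ≤ L / (1 + α) * s ^ (1 + α) := by gcongr
  linarith [hpos (w + v)]

theorem holder_self_bounding
    {H : Type*} [NormedAddCommGroup H] [InnerProductSpace ℝ H] [CompleteSpace H]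
    (φ : H → ℝ) (hdiff : Differentiable ℝ φ) (hpos : ∀ w : H, 0 ≤ φ w)
    (α L : ℝ) (hα : 0 < α) (hα1 : α ≤ 1) (hL : 0 < L)
    (hHolder : ∀ w w' : H, ‖gradient φ w - gradient φ w'‖ ≤ L * ‖w - w'‖ ^ α) :
    ∀ w : H, ‖gradient φ w‖ ^ ((1 + α) / α) ≤ ((1 + α) * L ^ (1 / α) / α) * φ w :=
  holder_self_bounding_general φ hdiff hpos α L hα hL hHolder
end

section
/- Let (η_t)_{t∈ℕ} be a sequence of nonnegative reals with lim_{t→∞} η_t = 0 and ∑_{t=1}^∞ η_t = ∞. Let α, a > 0 and t₁ ∈ ℕ be such that η_t < 1/a for all t ≥ t₁. Then lim_{T→∞} ∑_{t=t₁}^T η_t^{1+α} ∏_{k=t+1}^T (1 - a η_k) = 0. -/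
/-!
Write `P(s, T) = ∏_{k=s}^T (1 - a η_k)`. The weights `w_{T,t} = η_t P(t+1, T)` are nonnegative and
telescope: `a ∑_{t=s}^T w_{T,t} = 1 - P(s, T) ≤ 1`. Each fixed weight tends to `0` as `T → ∞`, since
`P(s, T) ≤ exp (-a ∑_{k=s}^T η_k)` and the step sizes are not summable. The sum in question is
`∑_t w_{T,t} η_t^α` with `η_t^α → 0`, so it tends to `0` by the Toeplitz summation lemma.
-/

open Real Finset Filter Topology

theorem Finset.sum_mul_prod_Icc_one_sub {R : Type*} [CommRing R] (x : ℕ → R) (s T : ℕ) :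
    ∑ t ∈ Icc s T, x t * ∏ k ∈ Icc (t + 1) T, (1 - x k) = 1 - ∏ k ∈ Icc s T, (1 - x k) := by
  induction T with
  | zero => rcases Nat.eq_zero_or_pos s with rfl | hs <;> simp [*]
  | succ T ih =>
    rcases le_or_gt s (T + 1) with hs | hs
    · have hprod : ∀ t ∈ Icc s T, ∏ k ∈ Icc (t + 1) (T + 1), (1 - x k) =
          (∏ k ∈ Icc (t + 1) T, (1 - x k)) * (1 - x (T + 1)) := fun t ht =>
        prod_Icc_succ_top (by simp only [mem_Icc] at ht; omega) _
      rw [sum_Icc_succ_top hs, prod_Icc_succ_top hs, sum_congr rfl fun t ht => by rw [hprod t ht],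
        Icc_eq_empty_of_lt (Nat.lt_succ_self _), prod_empty]
      simp_rw [← mul_assoc, ← sum_mul, ih]
      ring
    · simp [Icc_eq_empty_of_lt hs]

theorem sum_Icc_mul_prod_one_sub_mul_le {η : ℕ → ℝ} {a : ℝ} (ha : 0 < a) {s T : ℕ}
    (hP : 0 ≤ ∏ k ∈ Icc s T, (1 - a * η k)) :
    ∑ t ∈ Icc s T, η t * ∏ k ∈ Icc (t + 1) T, (1 - a * η k) ≤ 1 / a := by
  rw [le_div_iff₀ ha, sum_mul]
  simp_rw [mul_right_comm _ _ a, mul_comm _ a]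
  rw [sum_mul_prod_Icc_one_sub (fun k => a * η k)]
  linarith

theorem Real.prod_one_sub_le_exp_neg_sum {ι : Type*} (s : Finset ι) (x : ι → ℝ)
    (hx : ∀ i ∈ s, x i ≤ 1) : ∏ i ∈ s, (1 - x i) ≤ exp (-∑ i ∈ s, x i) := by
  rw [← sum_neg_distrib, exp_sum]
  exact prod_le_prod (fun i hi => sub_nonneg.2 (hx i hi)) fun i _ => one_sub_le_exp_neg _

theorem tendsto_sum_Icc_atTop_of_nonneg {f : ℕ → ℝ} (hf : ∀ t, 0 ≤ f t) {m : ℕ}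
    (h : Tendsto (fun T => ∑ t ∈ Icc m T, f t) atTop atTop) (s : ℕ) :
    Tendsto (fun T => ∑ t ∈ Icc s T, f t) atTop atTop := by
  refine tendsto_atTop_mono (fun T => ?_) (tendsto_atTop_add_const_left _ (-∑ t ∈ range s, f t) h)
  have hdisj : Disjoint (range s) (Icc s T) := disjoint_left.2 fun t ht ht' => by
    simp only [mem_range, mem_Icc] at ht ht'; omega
  have hsub : Icc m T ⊆ range s ∪ Icc s T := fun t ht => by
    simp only [mem_union, mem_range, mem_Icc] at ht ⊢; omega
  have := sum_le_sum_of_subset_of_nonneg hsub fun t _ _ => hf t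
  rw [sum_union hdisj] at this
  linarith

theorem tendsto_prod_Icc_one_sub_of_tendsto_sum {x : ℕ → ℝ} {s : ℕ} (hx : ∀ k, s ≤ k → x k ≤ 1)
    (hsum : Tendsto (fun T => ∑ k ∈ Icc s T, x k) atTop atTop) :
    Tendsto (fun T => ∏ k ∈ Icc s T, (1 - x k)) atTop (𝓝 0) := by
  have hx' : ∀ T, ∀ k ∈ Icc s T, x k ≤ 1 := fun T k hk => hx k (mem_Icc.1 hk).1
  exact squeeze_zero (fun T => prod_nonneg fun k hk => sub_nonneg.2 (hx' T k hk))
    (fun T => prod_one_sub_le_exp_neg_sum _ _ (hx' T))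
    (tendsto_exp_atBot.comp (tendsto_neg_atTop_atBot.comp hsum))

theorem tendsto_sum_Icc_mul_of_tendsto_zero {w : ℕ → ℕ → ℝ} {b : ℕ → ℝ} {s : ℕ} {C : ℝ}
    (hw : ∀ T, ∀ t ∈ Icc s T, 0 ≤ w T t) (hC : ∀ T, ∑ t ∈ Icc s T, w T t ≤ C)
    (hcol : ∀ t, s ≤ t → Tendsto (fun T => w T t) atTop (𝓝 0))
    (hb : Tendsto b atTop (𝓝 0)) :
    Tendsto (fun T => ∑ t ∈ Icc s T, w T t * b t) atTop (𝓝 0) := by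
  rw [Metric.tendsto_atTop]
  intro ε hε
  have hC0 : 0 ≤ C := (sum_nonneg (hw 0)).trans (hC 0)
  set δ := ε / (2 * (C + 1))
  have hδC : δ * C < ε / 2 := by
    rw [div_mul_eq_mul_div, div_lt_iff₀ (by positivity)]
    nlinarith
  have hb' : Tendsto (fun t => |b t|) atTop (𝓝 0) := by simpa using hb.abs
  obtain ⟨N, hN⟩ := eventually_atTop.1
    ((hb'.eventually_lt_const (by positivity : (0 : ℝ) < δ)).mono fun _ h => h.le)
  have hfinite : Tendsto (fun T => ∑ t ∈ Ico s N, |w T t * b t|) atTop (𝓝 0) := by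
    simpa using tendsto_finsetSum _ fun t ht => ((hcol t (mem_Ico.1 ht).1).mul_const (b t)).abs
  obtain ⟨T₀, hT₀⟩ := eventually_atTop.1 (hfinite.eventually_lt_const (half_pos hε))
  refine ⟨T₀, fun T hT => ?_⟩
  rw [Real.dist_eq, sub_zero, ← sum_filter_add_sum_filter_not (Icc s T) (· < N)]
  have hhead : |∑ t ∈ Icc s T with t < N, w T t * b t| ≤ ∑ t ∈ Ico s N, |w T t * b t| :=
    (abs_sum_le_sum_abs _ _).trans <| sum_le_sum_of_subset_of_nonneg
      (fun t ht => by simp only [mem_filter, mem_Icc, mem_Ico] at ht ⊢; omega)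
      fun _ _ _ => abs_nonneg _
  have htail : |∑ t ∈ Icc s T with ¬t < N, w T t * b t| ≤ δ * C := calc
    _ ≤ ∑ t ∈ Icc s T with ¬t < N, w T t * δ := by
      refine (abs_sum_le_sum_abs _ _).trans (sum_le_sum fun t ht => ?_)
      simp only [mem_filter, not_lt] at ht
      rw [abs_mul, abs_of_nonneg (hw T t ht.1)]
      exact mul_le_mul_of_nonneg_left (hN t ht.2) (hw T t ht.1)
    _ ≤ ∑ t ∈ Icc s T, w T t * δ :=
      sum_le_sum_of_subset_of_nonneg (filter_subset _ _) fun t ht _ =>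
        mul_nonneg (hw T t ht) (by positivity)
    _ ≤ δ * C := by rw [← sum_mul, mul_comm]; gcongr; exact hC T
  linarith [abs_add_le (∑ t ∈ Icc s T with t < N, w T t * b t)
    (∑ t ∈ Icc s T with ¬t < N, w T t * b t), hT₀ T hT]

theorem step_size_product_lemma
    (η : ℕ → ℝ) (hη : ∀ t, 0 ≤ η t)
    (hlim : Tendsto η atTop (nhds 0))
    (hdiv : Tendsto (fun T => ∑ t ∈ Finset.Icc 1 T, η t) atTop atTop)
    (α a : ℝ) (hα : 0 < α) (ha : 0 < a) (t₁ : ℕ)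
    (hsmall : ∀ t, t₁ ≤ t → η t < 1 / a) :
    Tendsto (fun T => ∑ t ∈ Finset.Icc t₁ T,
        η t ^ (1 + α) * ∏ k ∈ Finset.Icc (t + 1) T, (1 - a * η k))
      atTop (nhds 0) := by
  have hfac : ∀ k, t₁ ≤ k → a * η k ≤ 1 := fun k hk => ((lt_div_iff₀' ha).1 (hsmall k hk)).le
  have hP : ∀ s T, t₁ ≤ s → 0 ≤ ∏ k ∈ Icc s T, (1 - a * η k) := fun s T hs =>
    prod_nonneg fun k hk => sub_nonneg.2 (hfac k (hs.trans (mem_Icc.1 hk).1))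
  have hw : ∀ T, ∀ t ∈ Icc t₁ T, 0 ≤ η t * ∏ k ∈ Icc (t + 1) T, (1 - a * η k) :=
    fun T t ht => mul_nonneg (hη t) (hP _ _ (by simp only [mem_Icc] at ht; omega))
  have hcol : ∀ t, t₁ ≤ t →
      Tendsto (fun T => η t * ∏ k ∈ Icc (t + 1) T, (1 - a * η k)) atTop (𝓝 0) := by
    intro t ht
    have hsum : Tendsto (fun T => ∑ k ∈ Icc (t + 1) T, a * η k) atTop atTop := by
      simp_rw [← mul_sum]
      exact (tendsto_sum_Icc_atTop_of_nonneg hη hdiv _).const_mul_atTop ha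
    simpa using (tendsto_prod_Icc_one_sub_of_tendsto_sum (fun k hk => hfac k (by omega))
      hsum).const_mul (η t)
  have hb : Tendsto (fun t => η t ^ α) atTop (𝓝 0) := by
    simpa [zero_rpow hα.ne'] using hlim.rpow_const (Or.inr hα.le)
  refine (tendsto_sum_Icc_mul_of_tendsto_zero hw
    (fun T => sum_Icc_mul_prod_one_sub_mul_le ha (hP t₁ T le_rfl)) hcol hb).congr fun T =>
    sum_congr rfl fun t _ => ?_
  rw [rpow_add' (hη t) (by positivity), rpow_one]
  ring
end

section
/- Let (B_t) be a nonnegative real sequence, μ > 0, C > 0, α ∈ (0,1], and let η_t = 2/((t+1)μ). Suppose there exists t₀ ∈ ℕ, t₀ ≥ 1, such that B_{t+1} ≤ ((t-1)/(t+1)) B_t + C (2/((t+1)μ))^{1+α} for all t ≥ t₀. Then for all T ≥ t₀, B_{T+1} ≤ t₀(t₀-1) B_{t₀} / (T(T+1)) + (1 + 1/t₀)^{1-α} C (2/μ)^{1+α} / ((2-α) T^α). In particular B_T = O(T^{-α}). -/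
open Real Finset

/-!
Multiplying the recursion by `t (t + 1)` turns it into `W (t + 1) ≤ W t + Q t^(1-α)` for the
weighted quantity `W t = (t - 1) t B t` and `Q = C (2/μ)^(1+α)`, so `W` telescopes. The sum of
`t^(1-α)` over `t ≤ T` is at most `(T + 1)^(2-α) / (2 - α)`, by comparing each term with the
increment of `x ↦ x^(2-α) / (2 - α)` via Bernoulli's inequality, and dividing by `T (T + 1)`
gives the rate `T^(-α)` up to the factor `((T + 1) / T)^(1-α) ≤ (1 + 1/t₀)^(1-α)`.
-/

theorem le_add_sum_Icc_of_succ_le_add {M : Type*} [AddCommMonoid M] [PartialOrder M]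
    [IsOrderedAddMonoid M] {u g : ℕ → M} {m : ℕ} (h : ∀ n, m ≤ n → u (n + 1) ≤ u n + g n) :
    ∀ n, m ≤ n → u (n + 1) ≤ u m + ∑ k ∈ Icc m n, g k := by
  intro n hn
  induction n, hn using Nat.le_induction with
  | base => simpa using h m le_rfl
  | succ n hmn ih =>
    rw [sum_Icc_succ_top (by omega), ← add_assoc]
    exact (h (n + 1) (by omega)).trans (add_le_add_left ih _)

theorem rpow_add_mul_rpow_sub_one_le {a p : ℝ} (ha : 0 < a) (hp : 1 ≤ p) :
    a ^ p + p * a ^ (p - 1) ≤ (a + 1) ^ p := by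
  have bernoulli : 1 + p * a⁻¹ ≤ (1 + a⁻¹) ^ p :=
    one_add_mul_self_le_rpow_one_add (by linarith [inv_pos.2 ha]) hp
  calc a ^ p + p * a ^ (p - 1) = a ^ p * (1 + p * a⁻¹) := by
        rw [rpow_sub_one ha.ne']; field_simp
    _ ≤ a ^ p * (1 + a⁻¹) ^ p := by gcongr
    _ = (a + 1) ^ p := by
        rw [← mul_rpow ha.le (by positivity), mul_add, mul_inv_cancel₀ ha.ne', mul_one]

theorem sum_Icc_rpow_one_sub_le {α : ℝ} (hα : α ≤ 1) (n : ℕ) :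
    ∑ k ∈ Icc 1 n, (k : ℝ) ^ (1 - α) ≤ ((n : ℝ) + 1) ^ (2 - α) / (2 - α) := by
  have hp : 0 < 2 - α := by linarith
  induction n with
  | zero => simp [hp.le]
  | succ n ih =>
    rw [sum_Icc_succ_top (by omega), le_div_iff₀ hp, add_mul]
    have bernoulli := rpow_add_mul_rpow_sub_one_le (a := (n : ℝ) + 1) (by positivity)
      (show 1 ≤ 2 - α by linarith)
    rw [show 2 - α - 1 = 1 - α by ring] at bernoulli
    have ih' := (le_div_iff₀ hp).1 ih
    push_cast
    linarith

theorem le_add_mul_rpow_div_of_succ_le_add {u : ℕ → ℝ} {Q α : ℝ} {m : ℕ} (hm : 1 ≤ m)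
    (hα : α ≤ 1) (hQ : 0 ≤ Q) (h : ∀ n, m ≤ n → u (n + 1) ≤ u n + Q * (n : ℝ) ^ (1 - α))
    (n : ℕ) (hn : m ≤ n) :
    u (n + 1) ≤ u m + Q * (((n : ℝ) + 1) ^ (2 - α) / (2 - α)) := by
  have htele := le_add_sum_Icc_of_succ_le_add h n hn
  have hsub : ∑ k ∈ Icc m n, (k : ℝ) ^ (1 - α) ≤ ∑ k ∈ Icc 1 n, (k : ℝ) ^ (1 - α) :=
    sum_le_sum_of_subset_of_nonneg (Icc_subset_Icc_left hm) fun k _ _ => by positivity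
  rw [← mul_sum] at htele
  have := mul_le_mul_of_nonneg_left (hsub.trans (sum_Icc_rpow_one_sub_le hα n)) hQ
  linarith

theorem mul_add_one_mul_div_add_one_rpow_le {x c α : ℝ} (hx : 0 < x) (hc : 0 ≤ c)
    (hα : 0 ≤ α) :
    x * (x + 1) * (c / (x + 1)) ^ (1 + α) ≤ c ^ (1 + α) * x ^ (1 - α) := by
  have hx1 : 0 < x + 1 := by linarith
  calc x * (x + 1) * (c / (x + 1)) ^ (1 + α) = c ^ (1 + α) * (x / (x + 1) ^ α) := by
        rw [div_rpow hc hx1.le, rpow_add hx1, rpow_one]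
        field_simp
    _ ≤ c ^ (1 + α) * (x / x ^ α) := by
        gcongr
        linarith
    _ = c ^ (1 + α) * x ^ (1 - α) := by rw [rpow_sub hx, rpow_one]

theorem mul_add_one_mul_le_of_le_recursion {b b' t μ C α : ℝ} (ht : 0 < t) (hμ : 0 ≤ μ)
    (hC : 0 ≤ C) (hα : 0 ≤ α)
    (h : b' ≤ (t - 1) / (t + 1) * b + C * (2 / ((t + 1) * μ)) ^ (1 + α)) :
    t * (t + 1) * b' ≤ (t - 1) * t * b + C * (2 / μ) ^ (1 + α) * t ^ (1 - α) := by
  rw [show 2 / ((t + 1) * μ) = 2 / μ / (t + 1) by rw [div_div, mul_comm]] at h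
  calc t * (t + 1) * b'
      ≤ t * (t + 1) * ((t - 1) / (t + 1) * b + C * (2 / μ / (t + 1)) ^ (1 + α)) := by gcongr
    _ = (t - 1) * t * b + C * (t * (t + 1) * (2 / μ / (t + 1)) ^ (1 + α)) := by
        field_simp
    _ ≤ (t - 1) * t * b + C * ((2 / μ) ^ (1 + α) * t ^ (1 - α)) := by
        gcongr _ + C * ?_
        exact mul_add_one_mul_div_add_one_rpow_le ht (by positivity) hα
    _ = (t - 1) * t * b + C * (2 / μ) ^ (1 + α) * t ^ (1 - α) := by ring

theorem add_one_rpow_div_le {T t₀ α : ℝ} (ht₀ : 0 < t₀) (hT : t₀ ≤ T) (hα : α ≤ 1) :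
    (T + 1) ^ (2 - α) / (T * (T + 1)) ≤ (1 + 1 / t₀) ^ (1 - α) / T ^ α := by
  have hT0 : 0 < T := ht₀.trans_le hT
  have hT1 : 0 < T + 1 := by linarith
  have hratio : T + 1 ≤ (1 + 1 / t₀) * T := by
    have := (one_le_div ht₀).2 hT
    calc T + 1 ≤ T + T / t₀ := by linarith
      _ = (1 + 1 / t₀) * T := by ring
  calc (T + 1) ^ (2 - α) / (T * (T + 1)) = (T + 1) ^ (1 - α) / T := by
        rw [show 2 - α = 1 + (1 - α) by ring, rpow_add hT1, rpow_one]; field_simp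
    _ ≤ ((1 + 1 / t₀) * T) ^ (1 - α) / T := by gcongr
    _ = (1 + 1 / t₀) ^ (1 - α) / T ^ α := by
        rw [mul_rpow (by positivity) hT0.le, rpow_sub hT0, rpow_one]
        field_simp

theorem pl_rate_recursion_general
    (B : ℕ → ℝ) (μ C α : ℝ) (t₀ : ℕ)
    (hμ : 0 < μ) (hC : 0 < C) (hα : 0 < α) (hα1 : α ≤ 1) (ht₀ : 1 ≤ t₀)
    (hrec : ∀ t : ℕ, t₀ ≤ t →
      B (t + 1) ≤ (((t : ℝ) - 1) / ((t : ℝ) + 1)) * B t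
        + C * (2 / (((t : ℝ) + 1) * μ)) ^ (1 + α)) :
    ∀ T : ℕ, t₀ ≤ T →
      B (T + 1) ≤ (t₀ : ℝ) * ((t₀ : ℝ) - 1) * B t₀ / ((T : ℝ) * ((T : ℝ) + 1))
        + (1 + 1 / (t₀ : ℝ)) ^ (1 - α) * C * (2 / μ) ^ (1 + α)
          / ((2 - α) * (T : ℝ) ^ α) := by
  intro T hT
  set Q := C * (2 / μ) ^ (1 + α) with hQ
  have hTpos : (0 : ℝ) < T * (T + 1) := by
    have : 0 < T := by omega
    positivity
  have hweighted := le_add_mul_rpow_div_of_succ_le_add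
    (u := fun t : ℕ => ((t : ℝ) - 1) * t * B t) (Q := Q) ht₀ hα1 (by positivity)
    (fun t ht => by
      have := mul_add_one_mul_le_of_le_recursion (Nat.cast_pos.2 (by omega)) hμ.le hC.le hα.le
        (hrec t ht)
      push_cast
      linarith)
    T hT
  push_cast at hweighted
  have hrate := add_one_rpow_div_le (Nat.cast_pos.2 ht₀) (Nat.cast_le.2 hT) hα1
  calc B (T + 1)
      ≤ (t₀ * (t₀ - 1) * B t₀ + Q * (((T : ℝ) + 1) ^ (2 - α) / (2 - α))) / (T * (T + 1)) := by
        rw [le_div_iff₀ hTpos]; linarith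
    _ = t₀ * (t₀ - 1) * B t₀ / (T * (T + 1))
        + Q / (2 - α) * (((T : ℝ) + 1) ^ (2 - α) / (T * (T + 1))) := by ring
    _ ≤ t₀ * (t₀ - 1) * B t₀ / (T * (T + 1))
        + Q / (2 - α) * ((1 + 1 / (t₀ : ℝ)) ^ (1 - α) / (T : ℝ) ^ α) := by
        gcongr
        exact div_nonneg (by positivity) (by linarith)
    _ = _ := by rw [div_mul_div_comm, hQ]; ring

theorem pl_rate_recursion
    (B : ℕ → ℝ) (μ C α : ℝ) (t₀ : ℕ)
    (hμ : 0 < μ) (hC : 0 < C) (hα : 0 < α) (hα1 : α ≤ 1) (ht₀ : 1 ≤ t₀)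
    (hB : ∀ t, 0 ≤ B t)
    (hrec : ∀ t : ℕ, t₀ ≤ t →
      B (t + 1) ≤ (((t : ℝ) - 1) / ((t : ℝ) + 1)) * B t
        + C * (2 / (((t : ℝ) + 1) * μ)) ^ (1 + α)) :
    ∀ T : ℕ, t₀ ≤ T →
      B (T + 1) ≤ (t₀ : ℝ) * ((t₀ : ℝ) - 1) * B t₀ / ((T : ℝ) * ((T : ℝ) + 1))
        + (1 + 1 / (t₀ : ℝ)) ^ (1 - α) * C * (2 / μ) ^ (1 + α)
          / ((2 - α) * (T : ℝ) ^ α) :=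
  pl_rate_recursion_general B μ C α t₀ hμ hC hα hα1 ht₀ hrec
end
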